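/- arXiv:1406.6721 — 5 statements merged into one kernel-verified Lean document; each statement's English description precedes it below -/
import Mathlib

section
/- Suppose (x_n, y_n) satisfies x_{n+1} = α_n x_n / y_n and y_{n+1} = β'_n y_n / (x_n + B_n y_n), where β'_n = α_{n+1}/(a α_n) and B_n = b/(a α_n) with a ≠ 0 and α_n ≠ 0 for all n. Then x_{n+2} = a x_{n+1}^2 + b x_{n+1} for all n. -/
/-!
Substituting `β'` and `B` gives `y (n+1) = α (n+1) * y n / (a * α n * x n + b * y n)`, so the
factor `α (n+1)` cancels in `x (n+2) = α (n+1) * x (n+1) / y (n+1)`, which leaves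
`x (n+1) * (a * (α n * x n / y n) + b) = x (n+1) * (a * x (n+1) + b)`.
-/

theorem div_mul_div_add_div_mul_eq {K : Type*} [Field K] {q : K} (hq : q ≠ 0) (p c x y : K) :
    p / q * y / (x + c / q * y) = p * y / (q * x + c * y) := by
  rw [div_mul_eq_mul_div, div_mul_eq_mul_div, add_div' _ _ _ hq, div_div_div_cancel_right₀ hq,
    mul_comm x q]

theorem rational_system_folds_to_quadratic_general
    (a b : ℝ) (ha : a ≠ 0)
    (α β' B x y : ℕ → ℝ)
    (hα : ∀ n, α n ≠ 0)
    (hβ' : ∀ n, β' n = α (n + 1) / (a * α n))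
    (hB : ∀ n, B n = b / (a * α n))
    (hy : ∀ n, y n ≠ 0)
    (hrx : ∀ n, x (n + 1) = α n * x n / y n)
    (hry : ∀ n, y (n + 1) = β' n * y n / (x n + B n * y n)) :
    ∀ n, x (n + 2) = a * x (n + 1) ^ 2 + b * x (n + 1) := by
  intro n
  have hy_succ : y (n + 1) = α (n + 1) * y n / (a * α n * x n + b * y n) := by
    rw [hry, hβ', hB, div_mul_div_add_div_mul_eq (mul_ne_zero ha (hα n))]
  calc x (n + 2)
      = α (n + 1) * x (n + 1) / y (n + 1) := hrx (n + 1)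
    _ = x (n + 1) * (a * α n * x n + b * y n) / y n := by
      rw [hy_succ, div_div_eq_mul_div, mul_assoc, mul_div_mul_left _ _ (hα (n + 1))]
    _ = x (n + 1) * (a * (α n * x n / y n) + b) := by field_simp [hy n]
    _ = a * x (n + 1) ^ 2 + b * x (n + 1) := by rw [← hrx]; ring

/-- The rational system (rhsc) folds to the first-order quadratic core
x_{n+2} = a x_{n+1}^2 + b x_{n+1}. -/
theorem rational_system_folds_to_quadratic
    (a b : ℝ) (ha : a ≠ 0)
    (α β' B x y : ℕ → ℝ)
    (hα : ∀ n, α n ≠ 0)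
    (hβ' : ∀ n, β' n = α (n + 1) / (a * α n))
    (hB : ∀ n, B n = b / (a * α n))
    (hy : ∀ n, y n ≠ 0)
    (hden : ∀ n, x n + B n * y n ≠ 0)
    (hrx : ∀ n, x (n + 1) = α n * x n / y n)
    (hry : ∀ n, y (n + 1) = β' n * y n / (x n + B n * y n)) :
    ∀ n, x (n + 2) = a * x (n + 1) ^ 2 + b * x (n + 1) :=
  rational_system_folds_to_quadratic_general a b ha α β' B x y hα hβ' hB hy hrx hry
end

section
/- Let a < 0, 0 < b < 4, and let r_{n+1} = a r_n^2 + b r_n with r_0 ∈ (0, -b/a). Define x_{n+1} = r_n (with appropriate x_0) and y_n = α_n x_n / x_{n+1} for a bounded sequence α_n. Then |y_n| ≤ (16 / (b^2 (4-b))) |α_n| for all n sufficiently large; in particular, the orbit (x_n, y_n) is bounded if α_n is bounded. -/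
/-!
Write `f t = a t² + b t = t (a t + b)`. Since `a < 0`, `f` is positive on `(0, -b/a)` and bounded
by its vertex value `μ = -b²/(4a)`, which lies below `-b/a` because `b < 4`; so the orbit stays in
`(0, -b/a)` and `r (n + 1) ≤ μ`. Hence `y (n + 2) = α (n + 2) · r (n + 1) / r (n + 2)` with
`r (n + 1) / r (n + 2) = 1 / (a r (n + 1) + b) ≤ 1 / (a μ + b) = 4 / (b (4 - b))`, which is at most
`16 / (b² (4 - b))` as `b < 4`.
-/

open Set Filter

theorem exists_forall_le_of_forall_ge_le {β : Type*} [Preorder β] [IsDirectedOrder β]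
    {f : ℕ → β} {N : ℕ} {C : β} (h : ∀ n, N ≤ n → f n ≤ C) : ∃ C', ∀ n, f n ≤ C' :=
  let ⟨C', hC'⟩ := (isBoundedUnder_of_eventually_le (eventually_atTop.2 ⟨N, h⟩)).bddAbove_range
  ⟨C', fun n => hC' (mem_range_self n)⟩

def logisticMap (a b t : ℝ) : ℝ := a * t ^ 2 + b * t

namespace logisticMap

variable {a b : ℝ}

theorem le_vertex (ha : a < 0) (t : ℝ) : logisticMap a b t ≤ -b ^ 2 / (4 * a) := by
  rw [logisticMap, le_div_iff_of_neg (by linarith)]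
  nlinarith [sq_nonneg (2 * a * t + b)]

theorem vertex_lt_root (ha : a < 0) (hb0 : 0 < b) (hb4 : b < 4) : -b ^ 2 / (4 * a) < -b / a := by
  have hroot : -b / a * (4 * a) = -4 * b := by field_simp [ha.ne]
  rw [div_lt_iff_of_neg (by linarith), hroot]
  nlinarith

theorem mapsTo_Ioo (ha : a < 0) (hb0 : 0 < b) (hb4 : b < 4) :
    MapsTo (logisticMap a b) (Ioo 0 (-b / a)) (Ioo 0 (-b / a)) := by
  rintro t ⟨ht0, ht⟩
  have hlin : 0 < a * t + b := by
    rw [lt_div_iff_of_neg ha] at ht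
    linarith
  refine ⟨?_, (le_vertex ha t).trans_lt (vertex_lt_root ha hb0 hb4)⟩
  rw [logisticMap]
  nlinarith

theorem linear_ge_of_le_vertex (ha : a < 0) {t : ℝ} (ht : t ≤ -b ^ 2 / (4 * a)) :
    b * (4 - b) / 4 ≤ a * t + b := by
  have hvertex : a * (-b ^ 2 / (4 * a)) = -b ^ 2 / 4 := by field_simp [ha.ne]
  nlinarith [mul_le_mul_of_nonpos_left ht ha.le]

theorem div_le_of_le_vertex (ha : a < 0) (hb0 : 0 < b) (hb4 : b < 4) {t : ℝ} (ht0 : 0 < t)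
    (ht : t ≤ -b ^ 2 / (4 * a)) : t / logisticMap a b t ≤ 16 / (b ^ 2 * (4 - b)) := by
  have hlin := linear_ge_of_le_vertex ha ht
  have hpos : 0 < b * (4 - b) / 4 := by nlinarith
  calc t / logisticMap a b t = 1 / (a * t + b) := by
        rw [logisticMap]
        field_simp
    _ ≤ 1 / (b * (4 - b) / 4) := one_div_le_one_div_of_le hpos hlin
    _ ≤ 16 / (b ^ 2 * (4 - b)) := by
        rw [div_le_div_iff₀ hpos (by nlinarith)]
        nlinarith

theorem orbit_mem_Ioo (ha : a < 0) (hb0 : 0 < b) (hb4 : b < 4) {r : ℕ → ℝ}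
    (hr0 : r 0 ∈ Ioo 0 (-b / a)) (hrec : ∀ n, r (n + 1) = logisticMap a b (r n)) (n : ℕ) :
    r n ∈ Ioo 0 (-b / a) := by
  induction n with
  | zero => exact hr0
  | succ n ih => exact hrec n ▸ mapsTo_Ioo ha hb0 hb4 ih

end logisticMap

/-- Boundedness of the orbit: eventually |y_n| ≤ (16/(b²(4-b))) |α_n|, and the
orbit (x_n, y_n) is bounded if α_n is bounded. -/
theorem orbit_bounded
    (a b : ℝ) (ha : a < 0) (hb0 : 0 < b) (hb4 : b < 4)
    (r x y α : ℕ → ℝ)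
    (hr0 : r 0 ∈ Set.Ioo 0 (-b / a))
    (hrec : ∀ n, r (n + 1) = a * r n ^ 2 + b * r n)
    (hx : ∀ n, x (n + 1) = r n)
    (hy : ∀ n, y n = α n * x n / x (n + 1))
    (hαbd : ∃ C, ∀ n, |α n| ≤ C) :
    (∃ N, ∀ n, N ≤ n → |y n| ≤ 16 / (b ^ 2 * (4 - b)) * |α n|) ∧
      ∃ C', ∀ n, |x n| ≤ C' ∧ |y n| ≤ C' := by
  have hrec' : ∀ n, r (n + 1) = logisticMap a b (r n) := hrec
  have hmem := logisticMap.orbit_mem_Ioo ha hb0 hb4 hr0 hrec'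
  have hyα : ∀ n, 2 ≤ n → |y n| ≤ 16 / (b ^ 2 * (4 - b)) * |α n| := by
    intro n hn
    obtain ⟨m, rfl⟩ := Nat.exists_eq_add_of_le' hn
    have hstep : r (m + 2) = logisticMap a b (r (m + 1)) := hrec' (m + 1)
    have hratio : r (m + 1) / r (m + 2) ≤ 16 / (b ^ 2 * (4 - b)) :=
      hstep ▸ logisticMap.div_le_of_le_vertex ha hb0 hb4 (hmem (m + 1)).1
        (hrec' m ▸ logisticMap.le_vertex ha (r m))
    rw [hy, hx, hx, mul_div_assoc, abs_mul, abs_of_pos (div_pos (hmem _).1 (hmem _).1), mul_comm]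
    exact mul_le_mul_of_nonneg_right hratio (abs_nonneg _)
  obtain ⟨C, hC⟩ := hαbd
  obtain ⟨Cx, hCx⟩ := exists_forall_le_of_forall_ge_le (f := fun n => |x n|) (N := 1) fun n hn => by
    obtain ⟨m, rfl⟩ := Nat.exists_eq_add_of_le' hn
    rw [hx, abs_of_pos (hmem m).1]
    exact (hmem m).2.le
  obtain ⟨Cy, hCy⟩ := exists_forall_le_of_forall_ge_le (f := fun n => |y n|) (N := 2) fun n hn =>
    (hyα n hn).trans (mul_le_mul_of_nonneg_left (hC n) (by positivity))
  exact ⟨⟨2, hyα⟩, max Cx Cy, fun n => ⟨(hCx n).trans (le_max_left _ _),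
    (hCy n).trans (le_max_right _ _)⟩⟩
end

section
/- Suppose f: ℕ × S × S → S is globally semi-invertible with semi-inversion h satisfying h(n,u,f(n,u,v)) = v and f(n,u,h(n,u,w)) = w for all n,u,v,w. Given any φ: ℕ × S × S → S, define g(n,u,v) = h(n+1, f(n,u,v), φ(n,u,f(n,u,v))). Then the system x_{n+1} = f(n,x_n,y_n), y_{n+1} = g(n,x_n,y_n) folds to the equation s_{n+2} = φ(n,s_n,s_{n+1}): i.e., f(n+1, f(n,u,v), g(n,u,v)) = φ(n,u,f(n,u,v)) for all n,u,v; consequently any orbit satisfies x_{n+2} = φ(n, x_n, x_{n+1}). -/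
theorem orbit_fst_add_two_eq {S : Type*} {f g φ : ℕ → S → S → S}
    (hfold : ∀ n u v, f (n + 1) (f n u v) (g n u v) = φ n u (f n u v))
    {x y : ℕ → S} (hx : ∀ n, x (n + 1) = f n (x n) (y n))
    (hy : ∀ n, y (n + 1) = g n (x n) (y n)) (n : ℕ) :
    x (n + 2) = φ n (x n) (x (n + 1)) := by
  rw [hx (n + 1), hx n, hy n, hfold]

theorem unfolding_theorem_general {S : Type*}
    (f h φ g : ℕ → S → S → S)
    (hsemi' : ∀ n u w, f n u (h n u w) = w)
    (hg : ∀ n u v, g n u v = h (n + 1) (f n u v) (φ n u (f n u v))) :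
    (∀ n u v, f (n + 1) (f n u v) (g n u v) = φ n u (f n u v)) ∧
      ∀ x y : ℕ → S,
        (∀ n, x (n + 1) = f n (x n) (y n)) →
        (∀ n, y (n + 1) = g n (x n) (y n)) →
        ∀ n, x (n + 2) = φ n (x n) (x (n + 1)) := by
  have hfold : ∀ n u v, f (n + 1) (f n u v) (g n u v) = φ n u (f n u v) := fun n u v => by
    rw [hg, hsemi']
  exact ⟨hfold, fun _ _ hx hy => orbit_fst_add_two_eq hfold hx hy⟩

/-- Inverse problem (unfolding): given f with semi-inversion h and prescribed core φ,
the system with g(n,u,v) = h(n+1, f(n,u,v), φ(n,u,f(n,u,v))) folds to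
s_{n+2} = φ(n, s_n, s_{n+1}). -/
theorem unfolding_theorem {S : Type*}
    (f h φ g : ℕ → S → S → S)
    (hsemi : ∀ n u v, h n u (f n u v) = v)
    (hsemi' : ∀ n u w, f n u (h n u w) = w)
    (hg : ∀ n u v, g n u v = h (n + 1) (f n u v) (φ n u (f n u v))) :
    (∀ n u v, f (n + 1) (f n u v) (g n u v) = φ n u (f n u v)) ∧
      ∀ x y : ℕ → S,
        (∀ n, x (n + 1) = f n (x n) (y n)) →
        (∀ n, y (n + 1) = g n (x n) (y n)) →
        ∀ n, x (n + 2) = φ n (x n) (x (n + 1)) :=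
  unfolding_theorem_general f h φ g hsemi' hg
end

section
/- Suppose (x_n, y_n) satisfies x_{n+1} = α_n x_n / y_n and y_{n+1} = α_n α_{n+1} / ((a x_n + b) y_n) with all α_n ≠ 0 and all denominators nonzero. Then x_{n+2} = a x_n^2 + b x_n for all n. -/
theorem rnh_folds_general
    (a b : ℝ)
    (α x y : ℕ → ℝ)
    (hα : ∀ n, α n ≠ 0)
    (hy : ∀ n, y n ≠ 0)
    (hrx : ∀ n, x (n + 1) = α n * x n / y n)
    (hry : ∀ n, y (n + 1) = α n * α (n + 1) / ((a * x n + b) * y n)) :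
    ∀ n, x (n + 2) = a * x n ^ 2 + b * x n := by
  intro n
  rw [hrx (n + 1), hrx n, hry n, div_div_eq_mul_div]
  field_simp [hα n, hα (n + 1), hy n]

/-- The rational system (rnh) folds to the second-order core
x_{n+2} = a x_n² + b x_n. -/
theorem rnh_folds
    (a b : ℝ)
    (α x y : ℕ → ℝ)
    (hα : ∀ n, α n ≠ 0)
    (hy : ∀ n, y n ≠ 0)
    (hx0 : ∀ n, x n ≠ 0)
    (hden : ∀ n, a * x n + b ≠ 0)
    (hrx : ∀ n, x (n + 1) = α n * x n / y n)
    (hry : ∀ n, y (n + 1) = α n * α (n + 1) / ((a * x n + b) * y n)) :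
    ∀ n, x (n + 2) = a * x n ^ 2 + b * x n :=
  rnh_folds_general a b α x y hα hy hrx hry
end

section
/- Suppose (x_n, y_n) satisfies x_{n+1} = α_n x_n / y_n and y_{n+1} = α_n α_{n+1} x_n / (α_n b x_n + (a x_n + c) y_n) with all α_n ≠ 0 and all denominators nonzero. Then x_{n+2} = a x_n + b x_{n+1} + c for all n (the core of the folding is an affine second-order equation). -/
/-!
In `x (n+2) = α (n+1) * x (n+1) / y (n+1)` the numerator `α n * α (n+1) * x n` of `y (n+1)`
cancels against `α (n+1) * x (n+1) = α (n+1) * α n * x n / y n`, leaving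
`(α n * b * x n + (a * x n + c) * y n) / y n = a * x n + b * x (n+1) + c`.
The cancellation is legitimate because `y (n+1) ≠ 0` forces that numerator to be nonzero.
-/

theorem lna_two_step_eq {K : Type*} [Field K] {a b c α α' x y : K} (hy : y ≠ 0)
    (hnum : α * α' * x ≠ 0) :
    α' * (α * x / y) / (α * α' * x / (α * b * x + (a * x + c) * y)) =
      a * x + b * (α * x / y) + c := by
  rw [div_div_eq_mul_div, div_eq_iff hnum]
  field_simp
  ring

theorem lna_folds_general
    (a b c : ℝ)
    (α x y : ℕ → ℝ)
    (hy : ∀ n, y n ≠ 0)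
    (hrx : ∀ n, x (n + 1) = α n * x n / y n)
    (hry : ∀ n, y (n + 1) =
      α n * α (n + 1) * x n / (α n * b * x n + (a * x n + c) * y n)) :
    ∀ n, x (n + 2) = a * x n + b * x (n + 1) + c := by
  intro n
  have hnum : α n * α (n + 1) * x n ≠ 0 := (div_ne_zero_iff.mp (hry n ▸ hy (n + 1))).1
  rw [hrx (n + 1), hry n, hrx n]
  exact lna_two_step_eq (hy n) hnum

/-- The rational system (lna) folds to the affine second-order core
x_{n+2} = a x_n + b x_{n+1} + c. -/
theorem lna_folds
    (a b c : ℝ)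
    (α x y : ℕ → ℝ)
    (hα : ∀ n, α n ≠ 0)
    (hy : ∀ n, y n ≠ 0)
    (hx0 : ∀ n, x n ≠ 0)
    (hden : ∀ n, α n * b * x n + (a * x n + c) * y n ≠ 0)
    (hrx : ∀ n, x (n + 1) = α n * x n / y n)
    (hry : ∀ n, y (n + 1) =
      α n * α (n + 1) * x n / (α n * b * x n + (a * x n + c) * y n)) :
    ∀ n, x (n + 2) = a * x n + b * x (n + 1) + c :=
  lna_folds_general a b c α x y hy hrx hry
end
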